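/- arXiv:1205.5360 — 2 statements merged into one kernel-verified Lean document; each statement's English description precedes it below -/
import Mathlib

section
/- Let 4 < β < 9/2 and let T : ℝ → ℝ be defined by T(x) = x + 2 if x ≤ 0 and T(x) = β − 2x if x > 0. Let μ be the measure on ℝ with density ρ with respect to Lebesgue measure, where ρ(x) = 1/27 for x ∈ (−β, 3β−16), ρ(x) = 1/18 for x ∈ (3β−16, 2−β), ρ(x) = 5/54 for x ∈ (2−β, 3β−14), ρ(x) = 1/9 for x ∈ (3β−14, 4−β), ρ(x) = 4/27 for x ∈ (4−β, β−4), ρ(x) = 2/9 for x ∈ (β−4, 6−β), ρ(x) = 7/27 for x ∈ (6−β, 2), ρ(x) = 1/9 for x ∈ (2, 8−β), ρ(x) = 2/27 for x ∈ (8−β, β), and ρ(x) = 0 otherwise. Then μ is a probability measure, μ is T-invariant, and μ([0, β]) = 2/3. -/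
/-!
Pushing a density `ρ` forward along the two affine branches `x ↦ x + 2` (on `x ≤ 0`) and
`x ↦ β - 2x` (on `x > 0`) gives the density
`y ↦ 1_{y ≤ 2} ρ(y - 2) + ½ · 1_{y < β} ρ((β - y) / 2)`, so invariance of `ρ` is this
transfer identity, required only almost everywhere. For the given step function all three terms
are constant on each gap of `-β < 3β-16 < 2-β < 3β-14 < 4-β < 0 < β-4 < 3β-12 < 6-β < 2 < 8-β < β`
(the order uses `4 < β < 9/2`), so the identity is one linear check per gap. The masses of `ℝ` and
of `[0, β]` are sums of value times length over these gaps.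
-/

open MeasureTheory Set
open scoped ENNReal

theorem Fin.exists_mem_Ioo_castSucc_succ {α : Type*} [LinearOrder α] {n : ℕ} (p : Fin (n + 1) → α)
    {y : α} (h₀ : p 0 < y) (hn : y < p (Fin.last n)) (hy : y ∉ range p) :
    ∃ i : Fin n, y ∈ Ioo (p i.castSucc) (p i.succ) := by
  induction n with
  | zero => exact absurd (h₀.trans hn) (lt_irrefl _)
  | succ n ih =>
    by_cases hlt : y < p (Fin.last n).castSucc
    · obtain ⟨i, hi⟩ := ih (p ∘ Fin.castSucc) h₀ hlt fun ⟨j, hj⟩ => hy ⟨_, hj⟩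
      exact ⟨i.castSucc, hi⟩
    · exact ⟨Fin.last n, lt_of_le_of_ne (not_lt.1 hlt) fun h => hy ⟨_, h⟩, hn⟩

namespace MeasureTheory

theorem ae_of_forall_mem_Ioo_castSucc_succ {α : Type*} [LinearOrder α] [MeasurableSpace α]
    (μ : Measure α) [NullSingletonClass μ] {P : α → Prop} {n : ℕ} (p : Fin (n + 1) → α)
    (hlo : ∀ y < p 0, P y) (hhi : ∀ y, p (Fin.last n) < y → P y)
    (hgap : ∀ i : Fin n, ∀ y ∈ Ioo (p i.castSucc) (p i.succ), P y) : ∀ᵐ y ∂μ, P y := by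
  refine measure_mono_null (fun y (hPy : ¬P y) => ?_) ((finite_range p).measure_zero μ)
  by_contra hy
  rcases lt_or_gt_of_ne fun h : y = p 0 => hy ⟨0, h.symm⟩ with h₀ | h₀
  · exact hPy (hlo y h₀)
  rcases lt_or_gt_of_ne fun h : y = p (Fin.last n) => hy ⟨_, h.symm⟩ with hn | hn
  · obtain ⟨i, hi⟩ := Fin.exists_mem_Ioo_castSucc_succ p h₀ hn hy
    exact hPy (hgap i y hi)
  · exact hPy (hhi y hn)

theorem _root_.Monotone.measure_Ioc_eq_sum {α : Type*} [LinearOrder α] [TopologicalSpace α]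
    [OrderClosedTopology α] [MeasurableSpace α] [OpensMeasurableSpace α] (ν : Measure α)
    {n : ℕ} {p : Fin (n + 1) → α} (hp : Monotone p) :
    ν (Ioc (p 0) (p (Fin.last n))) = ∑ i : Fin n, ν (Ioc (p i.castSucc) (p i.succ)) := by
  induction n with
  | zero => simp
  | succ n ih =>
    have hsum := ih (hp.comp Fin.strictMono_castSucc.monotone)
    simp only [Function.comp_apply, Fin.castSucc_zero, ← Fin.succ_castSucc] at hsum
    rw [Fin.sum_univ_castSucc, ← hsum, ← measure_union (Ioc_disjoint_Ioc_of_le le_rfl)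
      measurableSet_Ioc, Ioc_union_Ioc_eq_Ioc (hp (Fin.zero_le _)) (hp (Fin.castSucc_le_succ _)),
      Fin.succ_last]

theorem withDensity_apply_univ_of_support_subset {α : Type*} [MeasurableSpace α]
    {ν : Measure α} {ρ : α → ℝ≥0∞} {s : Set α} (hs : MeasurableSet s)
    (h : Function.support ρ ⊆ s) : ν.withDensity ρ univ = ν.withDensity ρ s := by
  rw [withDensity_apply _ MeasurableSet.univ, withDensity_apply _ hs, Measure.restrict_univ,
    ← lintegral_indicator hs, indicator_eq_self.2 h]

theorem Measure.map_piecewise {α β : Type*} [MeasurableSpace α] [MeasurableSpace β]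
    (ν : Measure α) {s : Set α} [DecidablePred (· ∈ s)] (hs : MeasurableSet s) {f g : α → β}
    (hf : Measurable f) (hg : Measurable g) :
    ν.map (s.piecewise f g) = (ν.restrict s).map f + (ν.restrict sᶜ).map g := by
  conv_lhs => rw [← Measure.restrict_add_restrict_compl hs (μ := ν)]
  rw [Measure.map_add _ _ (hf.piecewise hs hg), Measure.map_congr (piecewise_ae_eq_restrict hs),
    Measure.map_congr (piecewise_ae_eq_restrict_compl hs)]

end MeasureTheory

theorem MeasurableEquiv.map_withDensity {α β : Type*} [MeasurableSpace α] [MeasurableSpace β]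
    (e : α ≃ᵐ β) (ν : Measure α) (ρ : α → ℝ≥0∞) :
    (ν.withDensity ρ).map e = (ν.map e).withDensity (ρ ∘ e.symm) := by
  ext s hs
  rw [Measure.map_apply e.measurable hs, withDensity_apply _ (e.measurable hs),
    withDensity_apply _ hs, e.restrict_map, lintegral_map_equiv]
  simp

namespace Real

theorem withDensity_volume_Ioc_of_forall_mem_Ioo {ρ : ℝ → ℝ≥0∞} {a b : ℝ} {c : ℝ≥0∞}
    (h : ∀ y ∈ Ioo a b, ρ y = c) :
    volume.withDensity ρ (Ioc a b) = c * ENNReal.ofReal (b - a) := by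
  rw [withDensity_apply _ measurableSet_Ioc, setLIntegral_congr Ioo_ae_eq_Ioc.symm,
    setLIntegral_congr_fun measurableSet_Ioo h, setLIntegral_const, Real.volume_Ioo]

theorem withDensity_volume_Ioc_eq_ofReal_sum {ρ : ℝ → ℝ≥0∞} {n : ℕ} {p : Fin (n + 1) → ℝ}
    (hp : Monotone p) {c : Fin n → ℝ} (hc : ∀ i, 0 ≤ c i)
    (hgap : ∀ i : Fin n, ∀ y ∈ Ioo (p i.castSucc) (p i.succ), ρ y = ENNReal.ofReal (c i)) :
    volume.withDensity ρ (Ioc (p 0) (p (Fin.last n))) =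
      ENNReal.ofReal (∑ i, c i * (p i.succ - p i.castSucc)) := by
  rw [hp.measure_Ioc_eq_sum, ENNReal.ofReal_sum_of_nonneg fun i _ =>
    mul_nonneg (hc i) (sub_nonneg.2 (hp (Fin.castSucc_le_succ i)))]
  refine Finset.sum_congr rfl fun i _ => ?_
  rw [withDensity_volume_Ioc_of_forall_mem_Ioo (hgap i), ENNReal.ofReal_mul (hc i)]

theorem map_volume_mul_add {a : ℝ} (ha : a ≠ 0) (b : ℝ) :
    (volume : Measure ℝ).map (fun x => a * x + b) = ENNReal.ofReal |a⁻¹| • volume := by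
  rw [show (fun x => a * x + b) = (· + b) ∘ (a * ·) from rfl,
    ← Measure.map_map (measurable_add_const b) (measurable_const_mul a),
    Real.map_volume_mul_left ha, Measure.map_smul, map_add_right_eq_self]

theorem map_withDensity_volume_mul_add {a : ℝ} (ha : a ≠ 0) (b : ℝ) (ρ : ℝ → ℝ≥0∞) :
    (volume.withDensity ρ).map (fun x => a * x + b) =
      ENNReal.ofReal |a⁻¹| • volume.withDensity (fun y => ρ (a⁻¹ * (y - b))) := by
  let e : ℝ ≃ᵐ ℝ := (MeasurableEquiv.mulLeft₀ a ha).trans (MeasurableEquiv.addRight b)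
  have he : ⇑e = fun x => a * x + b := rfl
  have he_symm : ⇑e.symm = fun y => a⁻¹ * (y - b) := by
    funext y; simp [e, sub_eq_add_neg]
  rw [← he, e.map_withDensity, he, map_volume_mul_add ha, withDensity_smul_measure, he_symm]
  rfl

theorem map_withDensity_volume_piecewise_mul_add {s : Set ℝ} [DecidablePred (· ∈ s)]
    (hs : MeasurableSet s) {a c : ℝ} (ha : a ≠ 0) (hc : c ≠ 0) (b d : ℝ) {ρ : ℝ → ℝ≥0∞}
    (hρ : Measurable ρ) :
    (volume.withDensity ρ).map (s.piecewise (fun x => a * x + b) (fun x => c * x + d)) =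
      volume.withDensity fun y => ENNReal.ofReal |a⁻¹| * s.indicator ρ (a⁻¹ * (y - b)) +
        ENNReal.ofReal |c⁻¹| * sᶜ.indicator ρ (c⁻¹ * (y - d)) := by
  have h₁ : Measurable fun y => s.indicator ρ (a⁻¹ * (y - b)) :=
    (hρ.indicator hs).comp (by fun_prop)
  have h₂ : Measurable fun y => sᶜ.indicator ρ (c⁻¹ * (y - d)) :=
    (hρ.indicator hs.compl).comp (by fun_prop)
  rw [Measure.map_piecewise _ hs (by fun_prop) (by fun_prop), restrict_withDensity hs,
    restrict_withDensity hs.compl, ← withDensity_indicator hs, ← withDensity_indicator hs.compl,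
    map_withDensity_volume_mul_add ha, map_withDensity_volume_mul_add hc,
    ← withDensity_smul _ h₁, ← withDensity_smul _ h₂, ← withDensity_add_left (h₁.const_smul _)]
  rfl

end Real

noncomputable def invariantDensity (β x : ℝ) : ℝ≥0∞ :=
  if x ∈ Ioo (-β) (3 * β - 16) then ENNReal.ofReal (1 / 27)
  else if x ∈ Ioo (3 * β - 16) (2 - β) then ENNReal.ofReal (1 / 18)
  else if x ∈ Ioo (2 - β) (3 * β - 14) then ENNReal.ofReal (5 / 54)
  else if x ∈ Ioo (3 * β - 14) (4 - β) then ENNReal.ofReal (1 / 9)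
  else if x ∈ Ioo (4 - β) (β - 4) then ENNReal.ofReal (4 / 27)
  else if x ∈ Ioo (β - 4) (6 - β) then ENNReal.ofReal (2 / 9)
  else if x ∈ Ioo (6 - β) 2 then ENNReal.ofReal (7 / 27)
  else if x ∈ Ioo (2 : ℝ) (8 - β) then ENNReal.ofReal (1 / 9)
  else if x ∈ Ioo (8 - β) β then ENNReal.ofReal (2 / 27)
  else 0

/-- The jumps of `invariantDensity β`, refined by `0` (to split off `[0, β]`) and by `3β - 12`,
the only further jump of `y ↦ ρ (y - 2)` and `y ↦ ρ ((β - y) / 2)` in `(-β, β)`. -/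
def breakpoints (β : ℝ) : Fin 12 → ℝ :=
  ![-β, 3 * β - 16, 2 - β, 3 * β - 14, 4 - β, 0, β - 4, 3 * β - 12, 6 - β, 2, 8 - β, β]

noncomputable def stepValues : Fin 11 → ℝ :=
  ![1 / 27, 1 / 18, 5 / 54, 1 / 9, 4 / 27, 4 / 27, 2 / 9, 2 / 9, 7 / 27, 1 / 9, 2 / 27]

theorem stepValues_nonneg (i : Fin 11) : 0 ≤ stepValues i := by
  fin_cases i <;> norm_num [stepValues]

theorem measurable_invariantDensity (β : ℝ) : Measurable (invariantDensity β) := by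
  unfold invariantDensity
  repeat' first
    | exact measurable_const
    | refine Measurable.ite measurableSet_Ioo measurable_const ?_

section
variable {β : ℝ} (hβ₁ : 4 < β) (hβ₂ : β < 9 / 2)
include hβ₁ hβ₂

theorem monotone_breakpoints : Monotone (breakpoints β) :=
  Fin.monotone_iff_le_succ.2 fun i => by
    fin_cases i <;>
      simp only [breakpoints, Fin.reduceFinMk, Fin.reduceCastSucc, Fin.reduceSucc,
        Matrix.cons_val] <;>
      linarith

theorem invariantDensity_eq_of_mem_Ioo (i : Fin 11) {y : ℝ}
    (hy : y ∈ Ioo (breakpoints β i.castSucc) (breakpoints β i.succ)) :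
    invariantDensity β y = ENNReal.ofReal (stepValues i) := by
  fin_cases i <;>
    simp only [breakpoints, Fin.reduceFinMk, Fin.reduceCastSucc, Fin.reduceSucc, Matrix.cons_val,
      mem_Ioo] at hy <;>
    simp only [invariantDensity, mem_Ioo] <;>
    -- `↓` settles each `if` before its branches are visited, so only the branch taken is examined
    simp (disch := grind) only [↓if_neg, ↓if_pos] <;>
    rfl

theorem support_invariantDensity_subset : Function.support (invariantDensity β) ⊆ Ioc (-β) β := by
  refine Function.support_subset_iff'.2 fun y hy => ?_
  rw [mem_Ioc, not_and_or, not_lt, not_le] at hy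
  simp only [invariantDensity, mem_Ioo]
  simp (disch := grind) only [↓if_neg]

set_option maxHeartbeats 2000000 in
theorem invariantDensity_ae_eq_transfer :
    ∀ᵐ y, invariantDensity β y = (Iic 2).indicator (fun y => invariantDensity β (y - 2)) y +
      ENNReal.ofReal (1 / 2) * (Iio β).indicator (fun y => invariantDensity β ((β - y) / 2)) y := by
  refine ae_of_forall_mem_Ioo_castSucc_succ volume (breakpoints β) (fun y hy => ?_)
    (fun y hy => ?_) fun i y hy => ?_
  on_goal 3 => fin_cases i
  all_goals
    simp only [breakpoints, Fin.reduceFinMk, Fin.reduceCastSucc, Fin.reduceSucc, Fin.reduceLast,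
      Matrix.cons_val, mem_Ioo] at hy
    simp only [invariantDensity, indicator_apply, mem_Iic, mem_Iio, mem_Ioo]
    simp (disch := grind) only [↓if_neg, ↓if_pos]
    simp (disch := positivity) only [← ENNReal.ofReal_mul, ← ENNReal.ofReal_add, mul_zero,
      add_zero, zero_add] <;> norm_num

theorem map_withDensity_invariantDensity :
    (volume.withDensity (invariantDensity β)).map
      (fun x => if x ≤ 0 then x + 2 else β - 2 * x) = volume.withDensity (invariantDensity β) := by
  have hT : (fun x : ℝ => if x ≤ 0 then x + 2 else β - 2 * x) =
      (Iic 0).piecewise (fun x => 1 * x + 2) (fun x => -2 * x + β) := by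
    funext x
    by_cases hx : x ≤ 0 <;> simp only [piecewise, mem_Iic, hx, ↓reduceIte] <;> ring
  rw [hT, Real.map_withDensity_volume_piecewise_mul_add measurableSet_Iic one_ne_zero
    (by norm_num) 2 β (measurable_invariantDensity β)]
  refine withDensity_congr_ae ((invariantDensity_ae_eq_transfer hβ₁ hβ₂).mono fun y hy => ?_)
  dsimp only
  rw [hy, show (-2 : ℝ)⁻¹ * (y - β) = (β - y) / 2 by ring, show |(-2 : ℝ)⁻¹| = 1 / 2 by norm_num,
    inv_one, abs_one, ENNReal.ofReal_one, one_mul, one_mul, compl_Iic]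
  simp only [indicator_apply, mem_Iic, mem_Ioi, mem_Iio, sub_nonpos,
    div_pos_iff_of_pos_right (two_pos (α := ℝ)), sub_pos]

theorem withDensity_invariantDensity_univ : volume.withDensity (invariantDensity β) univ = 1 := by
  rw [withDensity_apply_univ_of_support_subset measurableSet_Ioc
      (support_invariantDensity_subset hβ₁ hβ₂),
    show Ioc (-β) β = Ioc (breakpoints β 0) (breakpoints β (Fin.last 11)) from rfl,
    Real.withDensity_volume_Ioc_eq_ofReal_sum (monotone_breakpoints hβ₁ hβ₂)
      stepValues_nonneg (invariantDensity_eq_of_mem_Ioo hβ₁ hβ₂),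
    ← ENNReal.ofReal_one]
  congr 1
  simp only [Fin.sum_univ_succ, Fin.sum_univ_zero, breakpoints, stepValues, Fin.reduceSucc,
    Fin.reduceCastSucc, Matrix.cons_val]
  ring

theorem withDensity_invariantDensity_Ioc_zero :
    volume.withDensity (invariantDensity β) (Ioc 0 β) = ENNReal.ofReal (2 / 3) := by
  let q : Fin 7 → ℝ := fun i => breakpoints β (Fin.natAdd 5 i)
  rw [show Ioc 0 β = Ioc (q 0) (q (Fin.last 6)) from rfl,
    Real.withDensity_volume_Ioc_eq_ofReal_sum (p := q)
      ((monotone_breakpoints hβ₁ hβ₂).comp (Fin.strictMono_natAdd 5).monotone)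
      (c := fun i => stepValues (Fin.natAdd 5 i))
      (fun i => stepValues_nonneg _)
      fun i _ hy => invariantDensity_eq_of_mem_Ioo hβ₁ hβ₂ (Fin.natAdd 5 i) hy]
  congr 1
  simp only [q, Fin.sum_univ_succ, Fin.sum_univ_zero, breakpoints, stepValues, Fin.reduceNatAdd,
    Fin.reduceSucc, Fin.reduceCastSucc, Matrix.cons_val]
  ring

end

theorem invariant_density_s_two_beta_four_ninehalves (β : ℝ) (hβ₁ : 4 < β) (hβ₂ : β < 9 / 2)
    (T : ℝ → ℝ) (hT : T = fun x => if x ≤ 0 then x + 2 else β - 2 * x)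
    (ρ : ℝ → ENNReal)
    (hρ : ρ = fun x =>
      if x ∈ Ioo (-β) (3 * β - 16) then ENNReal.ofReal (1 / 27)
      else if x ∈ Ioo (3 * β - 16) (2 - β) then ENNReal.ofReal (1 / 18)
      else if x ∈ Ioo (2 - β) (3 * β - 14) then ENNReal.ofReal (5 / 54)
      else if x ∈ Ioo (3 * β - 14) (4 - β) then ENNReal.ofReal (1 / 9)
      else if x ∈ Ioo (4 - β) (β - 4) then ENNReal.ofReal (4 / 27)
      else if x ∈ Ioo (β - 4) (6 - β) then ENNReal.ofReal (2 / 9)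
      else if x ∈ Ioo (6 - β) 2 then ENNReal.ofReal (7 / 27)
      else if x ∈ Ioo (2 : ℝ) (8 - β) then ENNReal.ofReal (1 / 9)
      else if x ∈ Ioo (8 - β) β then ENNReal.ofReal (2 / 27)
      else 0)
    (μ : Measure ℝ) (hμ : μ = volume.withDensity ρ) :
    IsProbabilityMeasure μ ∧ μ.map T = μ ∧ μ (Icc (0 : ℝ) β) = ENNReal.ofReal (2 / 3) := by
  obtain rfl : ρ = invariantDensity β := hρ
  subst hT hμ
  refine ⟨⟨withDensity_invariantDensity_univ hβ₁ hβ₂⟩, map_withDensity_invariantDensity hβ₁ hβ₂, ?_⟩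
  rw [measure_congr Ioc_ae_eq_Icc.symm, withDensity_invariantDensity_Ioc_zero hβ₁ hβ₂]
end

section
/- Let φ = (1+√5)/2, let 2 < β < 2φ, and let T : ℝ → ℝ be defined by T(x) = x + 2 if x ≤ 0 and T(x) = β − φ·x if x > 0. Set A = 1/(βφ − 2(β + φ − 4)) and let μ be the measure on ℝ with density ρ with respect to Lebesgue measure, where ρ(x) = A/φ² for x ∈ (β(1−φ), β−2φ), ρ(x) = A for x ∈ (β−2φ, β(1−φ)+2), ρ(x) = A for x ∈ (β(1−φ)+2, β−2φ+2), ρ(x) = φ·A for x ∈ (β−2φ+2, 2), ρ(x) = A/φ for x ∈ (2, β), and ρ(x) = 0 otherwise. Then μ is a probability measure, μ is T-invariant, and μ([0, β]) = 2(3−φ)·A. -/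
/-
The pushforward of `ρ · volume` under a piecewise affine map has the density
`y ↦ ∑ ρ x / |T' x|`, the sum running over the preimages `x` of `y`. For this `T` the preimages
of `y` are `y - 2` (when it is `≤ 0`) and `(β - y) / φ` (when it is `> 0`), so invariance of `ρ`
is a pointwise identity off finitely many breakpoints. On each interval between consecutive
breakpoints both sides are constant and the identity reduces to `1 / φ² + 1 / φ = 1` or
`1 + 1 / φ = φ`. The masses are sums of lengths times heights, simplified with `φ² = φ + 1`.
-/

open MeasureTheory Set

section

open scoped ENNReal

theorem MeasurableEquiv.map_withDensity_comp {α β : Type*} [MeasurableSpace α]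
    [MeasurableSpace β] (e : α ≃ᵐ β) (μ : Measure α) {f : β → ℝ≥0∞} (hf : Measurable f) :
    (μ.withDensity (f ∘ e)).map e = (μ.map e).withDensity f := by
  ext s hs
  rw [Measure.map_apply e.measurable hs, withDensity_apply _ (e.measurable hs),
    withDensity_apply _ hs, setLIntegral_map hs hf e.measurable]
  rfl

theorem MeasureTheory.Measure.map_piecewise_s16 {α β : Type*} [MeasurableSpace α]
    [MeasurableSpace β] (μ : Measure α) {s : Set α} [DecidablePred (· ∈ s)]
    (hs : MeasurableSet s) {f g : α → β} (hf : Measurable f) (hg : Measurable g) :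
    μ.map (s.piecewise f g) = (μ.restrict s).map f + (μ.restrict sᶜ).map g := by
  ext t ht
  rw [Measure.map_apply (hf.piecewise hs hg) ht, Measure.add_apply, Measure.map_apply hf ht,
    Measure.map_apply hg ht, Measure.restrict_apply (hf ht), Measure.restrict_apply (hg ht),
    ← measure_inter_add_sdiff _ hs, piecewise_preimage, ite_inter_self, sdiff_eq,
    ← ite_compl, ite_inter_self]

theorem Real.map_withDensity_mul_add {f : ℝ → ℝ≥0∞} (hf : Measurable f) {a : ℝ} (ha : a ≠ 0)
    (b : ℝ) :
    (volume.withDensity f).map (fun x => a * x + b) =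
      volume.withDensity (fun y => ENNReal.ofReal |a⁻¹| * f ((y - b) / a)) := by
  let e : ℝ ≃ᵐ ℝ := (MeasurableEquiv.mulLeft₀ a ha).trans (MeasurableEquiv.addRight b)
  have hf_eq : f = (fun y => f ((y - b) / a)) ∘ e := by
    funext x
    simp [e, MeasurableEquiv.mulLeft₀, ha]
  have hmap : volume.map e = ENNReal.ofReal |a⁻¹| • volume := by
    change volume.map ((· + b) ∘ (a * ·)) = _
    rw [← Measure.map_map (measurable_add_const b) (measurable_const_mul a),
      Real.map_volume_mul_left ha, Measure.map_smul, map_add_right_eq_self]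
  change (volume.withDensity f).map e = _
  conv_lhs => rw [hf_eq]
  rw [MeasurableEquiv.map_withDensity_comp e _ (f := fun y => f ((y - b) / a))
      (hf.comp (by fun_prop)), hmap,
    withDensity_smul_measure, ← withDensity_smul' _ _ ENNReal.ofReal_ne_top]
  rfl

theorem MeasureTheory.setLIntegral_Ioc_eq_sum_of_eqOn_Ioo {f : ℝ → ℝ≥0∞} {n : ℕ}
    {p : Fin (n + 1) → ℝ} {c : Fin n → ℝ} (hp : Monotone p) (hc : ∀ i, 0 ≤ c i)
    (hf : ∀ i, EqOn f (fun _ => ENNReal.ofReal (c i)) (Ioo (p i.castSucc) (p i.succ))) :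
    ∫⁻ x in Ioc (p 0) (p (Fin.last n)), f x =
      ENNReal.ofReal (∑ i, c i * (p i.succ - p i.castSucc)) := by
  induction n with
  | zero => simp
  | succ n ih =>
    have hmid : p 0 ≤ p (Fin.last n).castSucc := hp (Fin.zero_le _)
    have hend : p (Fin.last n).castSucc ≤ p (Fin.last n).succ := hp (Fin.castSucc_le_succ _)
    have hinit := ih (hp.comp Fin.strictMono_castSucc.monotone) (fun i => hc i.castSucc)
      (fun i => hf i.castSucc)
    have hlast : ∫⁻ x in Ioc (p (Fin.last n).castSucc) (p (Fin.last n).succ), f x =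
        ENNReal.ofReal (c (Fin.last n) * (p (Fin.last n).succ - p (Fin.last n).castSucc)) := by
      rw [setLIntegral_congr Ioo_ae_eq_Ioc.symm,
        setLIntegral_congr_fun measurableSet_Ioo (hf (Fin.last n)), setLIntegral_const,
        Real.volume_Ioo, ← ENNReal.ofReal_mul (hc _)]
    simp only [Function.comp_apply, Fin.castSucc_zero, ← Fin.succ_castSucc] at hinit
    rw [← Fin.succ_last, ← Ioc_union_Ioc_eq_Ioc hmid hend,
      lintegral_union measurableSet_Ioc (Ioc_disjoint_Ioc_of_le le_rfl), hinit, hlast,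
      ← ENNReal.ofReal_add, Fin.sum_univ_castSucc]
    · exact Finset.sum_nonneg fun i _ =>
        mul_nonneg (hc _) (sub_nonneg.2 (hp (Fin.castSucc_le_succ _)))
    · exact mul_nonneg (hc _) (sub_nonneg.2 hend)

end

section

open Real
open scoped ENNReal goldenRatio

theorem Real.inv_goldenRatio_eq_sub_one : φ⁻¹ = φ - 1 := by
  rw [inv_goldenRatio, ← one_sub_goldenConj]
  ring

theorem Real.div_goldenRatio (a : ℝ) : a / φ = a * (φ - 1) := by
  rw [div_eq_mul_inv, inv_goldenRatio_eq_sub_one]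

theorem Real.div_goldenRatio_sq (a : ℝ) : a / φ ^ 2 = a * (2 - φ) := by
  rw [div_eq_mul_inv, ← inv_pow, inv_goldenRatio_eq_sub_one]
  linear_combination a * goldenRatio_sq

theorem ENNReal.ofReal_inv_goldenRatio_mul (c : ℝ) :
    ENNReal.ofReal φ⁻¹ * ENNReal.ofReal c = ENNReal.ofReal (c / φ) := by
  rw [← ENNReal.ofReal_mul (by positivity), inv_mul_eq_div]

noncomputable def sPhiMap (β x : ℝ) : ℝ := if x ≤ 0 then x + 2 else β - φ * x

noncomputable def sPhiDensity (β A x : ℝ) : ℝ≥0∞ :=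
  if x ∈ Ioo (β * (1 - φ)) (β - 2 * φ) then ENNReal.ofReal (A / φ ^ 2)
  else if x ∈ Ioo (β - 2 * φ) (β * (1 - φ) + 2) then ENNReal.ofReal A
  else if x ∈ Ioo (β * (1 - φ) + 2) (β - 2 * φ + 2) then ENNReal.ofReal A
  else if x ∈ Ioo (β - 2 * φ + 2) 2 then ENNReal.ofReal (φ * A)
  else if x ∈ Ioo (2 : ℝ) β then ENNReal.ofReal (A / φ)
  else 0

/-- The transfer (Perron–Frobenius) operator of `sPhiMap β`, one term per branch. -/
noncomputable def sPhiTransfer (β : ℝ) (ρ : ℝ → ℝ≥0∞) (y : ℝ) : ℝ≥0∞ :=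
  (Iic 0).indicator ρ (y - 2) + ENNReal.ofReal φ⁻¹ * (Ioi 0).indicator ρ ((β - y) / φ)

theorem map_sPhiMap_withDensity (β : ℝ) {ρ : ℝ → ℝ≥0∞} (hρ : Measurable ρ) :
    (volume.withDensity ρ).map (sPhiMap β) = volume.withDensity (sPhiTransfer β ρ) := by
  have hT : sPhiMap β = (Iic 0).piecewise (fun x => 1 * x + 2) (fun x => -φ * x + β) := by
    ext x
    by_cases hx : x ≤ 0 <;> simp [sPhiMap, piecewise, hx, sub_eq_neg_add]
  rw [hT, Measure.map_piecewise_s16 _ measurableSet_Iic (by fun_prop) (by fun_prop), compl_Iic,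
    restrict_withDensity measurableSet_Iic, restrict_withDensity measurableSet_Ioi,
    ← withDensity_indicator measurableSet_Iic, ← withDensity_indicator measurableSet_Ioi,
    Real.map_withDensity_mul_add (hρ.indicator measurableSet_Iic) one_ne_zero,
    Real.map_withDensity_mul_add (hρ.indicator measurableSet_Ioi)
      (neg_ne_zero.2 goldenRatio_ne_zero),
    ← withDensity_add_left]
  · congr 1
    ext y
    simp only [sPhiTransfer, Pi.add_apply, inv_one, abs_one, ENNReal.ofReal_one, one_mul, div_one,
      inv_neg, abs_neg, abs_of_pos (inv_pos.2 goldenRatio_pos), div_neg]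
    rw [← neg_div, neg_sub]
  · exact ((hρ.indicator measurableSet_Iic).comp (by fun_prop)).const_mul _

theorem measurable_sPhiDensity (β A : ℝ) : Measurable (sPhiDensity β A) :=
  .ite measurableSet_Ioo measurable_const <| .ite measurableSet_Ioo measurable_const <|
    .ite measurableSet_Ioo measurable_const <| .ite measurableSet_Ioo measurable_const <|
    .ite measurableSet_Ioo measurable_const measurable_const

variable {β A x y : ℝ}

theorem sPhi_breakpoints_lt (hβ : β ∈ Ioo 2 (2 * φ)) :
    β * (1 - φ) < β - 2 * φ ∧ β - 2 * φ < 0 ∧ 0 < β * (1 - φ) + 2 := by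
  obtain ⟨hβ₁, hβ₂⟩ := hβ
  have hφ₁ : 0 < φ - 1 := sub_pos.2 one_lt_goldenRatio
  refine ⟨by nlinarith [goldenRatio_pos], by linarith, ?_⟩
  nlinarith [goldenRatio_sq, mul_lt_mul_of_pos_right hβ₂ hφ₁]

theorem sPhiDensity_of_le (hβ : β ∈ Ioo 2 (2 * φ)) (hx : x ≤ β * (1 - φ)) :
    sPhiDensity β A x = 0 := by
  obtain ⟨h₁, h₂, h₃⟩ := sPhi_breakpoints_lt hβ
  rw [sPhiDensity, if_neg (fun h => by linarith [h.1]), if_neg (fun h => by linarith [h.1]),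
    if_neg (fun h => by linarith [h.1]), if_neg (fun h => by linarith [h.1]),
    if_neg (fun h => by linarith [h.1, hβ.1])]

theorem sPhiDensity_of_ge (hβ : β ∈ Ioo 2 (2 * φ)) (hx : β ≤ x) : sPhiDensity β A x = 0 := by
  obtain ⟨h₁, h₂, h₃⟩ := sPhi_breakpoints_lt hβ
  rw [sPhiDensity, if_neg (fun h => by linarith [h.2, hβ.1]),
    if_neg (fun h => by linarith [h.2, hβ.1]), if_neg (fun h => by linarith [h.2, hβ.1]),
    if_neg (fun h => by linarith [h.2, hβ.1]), if_neg (fun h => by linarith [h.2])]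

theorem sPhiDensity_eq_div_sq (hx : x ∈ Ioo (β * (1 - φ)) (β - 2 * φ)) :
    sPhiDensity β A x = ENNReal.ofReal (A / φ ^ 2) :=
  if_pos hx

theorem sPhiDensity_eq_self (hx : x ∈ Ioo (β - 2 * φ) (β - 2 * φ + 2))
    (hx' : x ≠ β * (1 - φ) + 2) : sPhiDensity β A x = ENNReal.ofReal A := by
  rw [sPhiDensity, if_neg (fun h => by linarith [h.2, hx.1])]
  rcases hx'.lt_or_gt with hlt | hgt
  · exact if_pos ⟨hx.1, hlt⟩
  · rw [if_neg (fun h => by linarith [h.2]), if_pos ⟨hgt, hx.2⟩]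

theorem sPhiDensity_eq_mul (hβ : β ∈ Ioo 2 (2 * φ)) (hx : x ∈ Ioo (β - 2 * φ + 2) 2) :
    sPhiDensity β A x = ENNReal.ofReal (φ * A) := by
  obtain ⟨h₁, h₂, h₃⟩ := sPhi_breakpoints_lt hβ
  rw [sPhiDensity, if_neg (fun h => by linarith [h.2, hx.1]),
    if_neg (fun h => by linarith [h.2, hx.1]), if_neg (fun h => by linarith [h.2, hx.1]),
    if_pos hx]

theorem sPhiDensity_eq_div (hβ : β ∈ Ioo 2 (2 * φ)) (hx : x ∈ Ioo 2 β) :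
    sPhiDensity β A x = ENNReal.ofReal (A / φ) := by
  obtain ⟨h₁, h₂, h₃⟩ := sPhi_breakpoints_lt hβ
  rw [sPhiDensity, if_neg (fun h => by linarith [h.2, hx.1]),
    if_neg (fun h => by linarith [h.2, hx.1]), if_neg (fun h => by linarith [h.2, hx.1]),
    if_neg (fun h => by linarith [h.2, hx.1]), if_pos hx]

theorem sPhiTransfer_sPhiDensity_of_lt (hβ : β ∈ Ioo 2 (2 * φ))
    (hy : y < β * (1 - φ) + 2) (hy₀ : y ≠ β * (1 - φ)) (hy₁ : y ≠ β - 2 * φ) :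
    sPhiTransfer β (sPhiDensity β A) y = sPhiDensity β A y := by
  obtain ⟨h₁, h₂, h₃⟩ := sPhi_breakpoints_lt hβ
  have hφ := goldenRatio_pos
  have hleft : (Iic 0).indicator (sPhiDensity β A) (y - 2) = 0 :=
    indicator_apply_eq_zero.2 fun _ => sPhiDensity_of_le hβ (by linarith)
  rw [sPhiTransfer, hleft, zero_add]
  rcases hy₀.lt_or_gt with hy₀ | hy₀
  · rw [indicator_apply_eq_zero.2 fun _ =>
        sPhiDensity_of_ge hβ ((le_div_iff₀ hφ).2 (by linarith)),
      mul_zero, sPhiDensity_of_le hβ hy₀.le]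
  have hz : 0 < (β - y) / φ := div_pos (by linarith [hβ.1]) hφ
  rw [indicator_of_mem (mem_Ioi.2 hz)]
  rcases hy₁.lt_or_gt with hy₁ | hy₁
  · rw [sPhiDensity_eq_div hβ ⟨(lt_div_iff₀ hφ).2 (by linarith),
        (div_lt_iff₀ hφ).2 (by linarith)⟩,
      sPhiDensity_eq_div_sq ⟨hy₀, hy₁⟩, ENNReal.ofReal_inv_goldenRatio_mul, div_div, ← sq]
  · rw [sPhiDensity_eq_mul hβ ⟨(lt_div_iff₀ hφ).2 (by linarith [goldenRatio_sq]),
        (div_lt_iff₀ hφ).2 (by linarith)⟩,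
      sPhiDensity_eq_self ⟨hy₁, by linarith⟩ hy.ne, ENNReal.ofReal_inv_goldenRatio_mul,
      mul_div_cancel_left₀ _ hφ.ne']

theorem sPhiTransfer_sPhiDensity_of_gt (hβ : β ∈ Ioo 2 (2 * φ)) (hA : 0 ≤ A)
    (hy : β * (1 - φ) + 2 < y) (hy₃ : y ≠ β - 2 * φ + 2) (hy₄ : y ≠ 2) (hy₅ : y ≠ β)
    (hyq : y ≠ 2 * β - 2 * φ) :
    sPhiTransfer β (sPhiDensity β A) y = sPhiDensity β A y := by
  obtain ⟨h₁, h₂, h₃⟩ := sPhi_breakpoints_lt hβ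
  have hφ := goldenRatio_pos
  rw [sPhiTransfer]
  rcases hy₅.symm.lt_or_gt with hy₅ | hy₅
  · rw [indicator_of_notMem (fun h => by linarith [mem_Iic.1 h, hβ.1]),
      indicator_of_notMem (fun h => by linarith [(div_pos_iff_of_pos_right hφ).1 (mem_Ioi.1 h)]),
      mul_zero, add_zero, sPhiDensity_of_ge hβ hy₅.le]
  have hz : (β - y) / φ ∈ Ioo (β - 2 * φ) (β - 2 * φ + 2) :=
    ⟨by linarith [div_pos (sub_pos.2 hy₅) hφ], (div_lt_iff₀ hφ).2 (by linarith [goldenRatio_sq])⟩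
  have hzq : (β - y) / φ ≠ β * (1 - φ) + 2 := fun h => hyq <| by
    rw [div_eq_iff hφ.ne'] at h
    linear_combination -h + β * goldenRatio_sq
  rw [indicator_of_mem (mem_Ioi.2 (div_pos (sub_pos.2 hy₅) hφ)), sPhiDensity_eq_self hz hzq,
    ENNReal.ofReal_inv_goldenRatio_mul]
  rcases hy₄.symm.lt_or_gt with hy₄ | hy₄
  · rw [indicator_of_notMem (fun h => by linarith [mem_Iic.1 h]), zero_add,
      sPhiDensity_eq_div hβ ⟨hy₄, hy₅⟩]
  rw [indicator_of_mem (mem_Iic.2 (by linarith))]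
  rcases hy₃.lt_or_gt with hy₃ | hy₃
  · rw [sPhiDensity_eq_div_sq ⟨by linarith, by linarith⟩,
      sPhiDensity_eq_self ⟨by linarith, hy₃⟩ hy.ne',
      ← ENNReal.ofReal_add (div_nonneg hA (by positivity)) (div_nonneg hA hφ.le),
      div_goldenRatio_sq, div_goldenRatio]
    congr 1
    ring
  · rw [sPhiDensity_eq_self ⟨by linarith, by linarith⟩ (by linarith),
      sPhiDensity_eq_mul hβ ⟨hy₃, hy₄⟩, ← ENNReal.ofReal_add hA (div_nonneg hA hφ.le),
      div_goldenRatio]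
    congr 1
    ring

theorem sPhiTransfer_sPhiDensity_ae_eq (hβ : β ∈ Ioo 2 (2 * φ)) (hA : 0 ≤ A) :
    sPhiTransfer β (sPhiDensity β A) =ᵐ[volume] sPhiDensity β A := by
  have hbreak : ∀ᵐ y, y ∉ ({β * (1 - φ), β - 2 * φ, β * (1 - φ) + 2, β - 2 * φ + 2, 2, β,
      2 * β - 2 * φ} : Set ℝ) :=
    measure_eq_zero_iff_ae_notMem.1 ((toFinite _).measure_zero _)
  filter_upwards [hbreak] with y hy
  simp only [mem_insert_iff, mem_singleton_iff, not_or] at hy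
  obtain ⟨hy₀, hy₁, hy₂, hy₃, hy₄, hy₅, hyq⟩ := hy
  rcases Ne.lt_or_gt hy₂ with hy₂ | hy₂
  · exact sPhiTransfer_sPhiDensity_of_lt hβ hy₂ hy₀ hy₁
  · exact sPhiTransfer_sPhiDensity_of_gt hβ hA hy₂ hy₃ hy₄ hy₅ hyq

theorem map_sPhiMap_withDensity_sPhiDensity (hβ : β ∈ Ioo 2 (2 * φ)) (hA : 0 ≤ A) :
    (volume.withDensity (sPhiDensity β A)).map (sPhiMap β) =
      volume.withDensity (sPhiDensity β A) := by
  rw [map_sPhiMap_withDensity β (measurable_sPhiDensity β A)]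
  exact withDensity_congr_ae (sPhiTransfer_sPhiDensity_ae_eq hβ hA)

theorem lintegral_sPhiDensity (hβ : β ∈ Ioo 2 (2 * φ)) (hA : 0 ≤ A) :
    ∫⁻ x, sPhiDensity β A x = ENNReal.ofReal (A * (β * φ - 2 * (β + φ - 4))) := by
  obtain ⟨h₁, h₂, h₃⟩ := sPhi_breakpoints_lt hβ
  have hsupp : Function.support (sPhiDensity β A) ⊆ Ioc (β * (1 - φ)) β := by
    intro x hx
    by_contra h
    rw [mem_Ioc, not_and_or, not_lt, not_le] at h
    rcases h with h | h
    · exact hx (sPhiDensity_of_le hβ h)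
    · exact hx (sPhiDensity_of_ge hβ h.le)
  rw [← setLIntegral_eq_of_support_subset hsupp]
  refine (setLIntegral_Ioc_eq_sum_of_eqOn_Ioo (f := sPhiDensity β A)
    (p := ![β * (1 - φ), β - 2 * φ, β * (1 - φ) + 2, β - 2 * φ + 2, 2, β])
    (c := ![A / φ ^ 2, A, A, φ * A, A / φ]) ?_ ?_ ?_).trans ?_
  · refine Fin.monotone_iff_le_succ.2 fun i => ?_
    fin_cases i <;>
      simp only [Fin.zero_eta, Fin.mk_one, Fin.reduceFinMk, Fin.isValue, Matrix.cons_val,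
        Fin.reduceSucc, Fin.reduceCastSucc, Fin.castSucc_zero, Fin.succ_zero_eq_one,
        Fin.castSucc_one, Fin.succ_one_eq_two] <;>
      linarith [hβ.1]
  · intro i
    fin_cases i <;>
      simp only [Fin.zero_eta, Fin.mk_one, Fin.reduceFinMk, Fin.isValue, Matrix.cons_val] <;>
      positivity
  · intro i
    fin_cases i
    · exact fun x hx => sPhiDensity_eq_div_sq hx
    · exact fun x (hx : x ∈ Ioo (β - 2 * φ) (β * (1 - φ) + 2)) =>
        sPhiDensity_eq_self ⟨hx.1, by linarith [hx.2]⟩ hx.2.ne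
    · exact fun x (hx : x ∈ Ioo (β * (1 - φ) + 2) (β - 2 * φ + 2)) =>
        sPhiDensity_eq_self ⟨by linarith [hx.1], hx.2⟩ hx.1.ne'
    · exact fun x hx => sPhiDensity_eq_mul hβ hx
    · exact fun x hx => sPhiDensity_eq_div hβ hx
  · simp only [Fin.sum_univ_five, Fin.isValue, Matrix.cons_val, Fin.reduceSucc,
      Fin.reduceCastSucc, Fin.castSucc_zero, Fin.succ_zero_eq_one]
    rw [div_goldenRatio_sq, div_goldenRatio]
    congr 1
    linear_combination (4 - β) * A * goldenRatio_sq

theorem sPhiDensity_measure_Icc (hβ : β ∈ Ioo 2 (2 * φ)) (hA : 0 ≤ A) :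
    volume.withDensity (sPhiDensity β A) (Icc 0 β) = ENNReal.ofReal (2 * (3 - φ) * A) := by
  obtain ⟨h₁, h₂, h₃⟩ := sPhi_breakpoints_lt hβ
  rw [withDensity_apply _ measurableSet_Icc, setLIntegral_congr Ioc_ae_eq_Icc.symm]
  refine (setLIntegral_Ioc_eq_sum_of_eqOn_Ioo (f := sPhiDensity β A)
    (p := ![0, β * (1 - φ) + 2, β - 2 * φ + 2, 2, β]) (c := ![A, A, φ * A, A / φ])
    ?_ ?_ ?_).trans ?_
  · refine Fin.monotone_iff_le_succ.2 fun i => ?_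
    fin_cases i <;>
      simp only [Fin.zero_eta, Fin.mk_one, Fin.reduceFinMk, Fin.isValue, Matrix.cons_val,
        Fin.reduceSucc, Fin.reduceCastSucc, Fin.castSucc_zero, Fin.succ_zero_eq_one,
        Fin.castSucc_one, Fin.succ_one_eq_two] <;>
      linarith [hβ.1]
  · intro i
    fin_cases i <;>
      simp only [Fin.zero_eta, Fin.mk_one, Fin.reduceFinMk, Fin.isValue, Matrix.cons_val] <;>
      positivity
  · intro i
    fin_cases i
    · exact fun x (hx : x ∈ Ioo 0 (β * (1 - φ) + 2)) =>
        sPhiDensity_eq_self ⟨by linarith [hx.1], by linarith [hx.2]⟩ hx.2.ne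
    · exact fun x (hx : x ∈ Ioo (β * (1 - φ) + 2) (β - 2 * φ + 2)) =>
        sPhiDensity_eq_self ⟨by linarith [hx.1], hx.2⟩ hx.1.ne'
    · exact fun x hx => sPhiDensity_eq_mul hβ hx
    · exact fun x hx => sPhiDensity_eq_div hβ hx
  · simp only [Fin.sum_univ_four, Fin.isValue, Matrix.cons_val, Fin.reduceSucc,
      Fin.reduceCastSucc, Fin.castSucc_zero, Fin.succ_zero_eq_one]
    rw [div_goldenRatio]
    congr 1
    linear_combination 2 * A * goldenRatio_sq

end

theorem invariant_density_s_phi_before_plateau (φ β A : ℝ) (hφ : φ = (1 + Real.sqrt 5) / 2)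
    (hβ₁ : 2 < β) (hβ₂ : β < 2 * φ) (hA : A = 1 / (β * φ - 2 * (β + φ - 4)))
    (T : ℝ → ℝ) (hT : T = fun x => if x ≤ 0 then x + 2 else β - φ * x)
    (ρ : ℝ → ENNReal)
    (hρ : ρ = fun x =>
      if x ∈ Ioo (β * (1 - φ)) (β - 2 * φ) then ENNReal.ofReal (A / φ ^ 2)
      else if x ∈ Ioo (β - 2 * φ) (β * (1 - φ) + 2) then ENNReal.ofReal A
      else if x ∈ Ioo (β * (1 - φ) + 2) (β - 2 * φ + 2) then ENNReal.ofReal A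
      else if x ∈ Ioo (β - 2 * φ + 2) 2 then ENNReal.ofReal (φ * A)
      else if x ∈ Ioo (2 : ℝ) β then ENNReal.ofReal (A / φ)
      else 0)
    (μ : Measure ℝ) (hμ : μ = volume.withDensity ρ) :
    IsProbabilityMeasure μ ∧ μ.map T = μ ∧
      μ (Icc (0 : ℝ) β) = ENNReal.ofReal (2 * (3 - φ) * A) := by
  obtain rfl : φ = Real.goldenRatio := hφ
  subst hA hT hρ hμ
  have hβ : β ∈ Ioo 2 (2 * Real.goldenRatio) := ⟨hβ₁, hβ₂⟩
  have hD : 0 < β * Real.goldenRatio - 2 * (β + Real.goldenRatio - 4) := by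
    linarith [Real.goldenRatio_sq, Real.goldenRatio_lt_two,
      mul_pos (sub_pos.2 Real.goldenRatio_lt_two) (sub_pos.2 hβ₂)]
  have hA : 0 ≤ 1 / (β * Real.goldenRatio - 2 * (β + Real.goldenRatio - 4)) := by positivity
  refine ⟨⟨?_⟩, map_sPhiMap_withDensity_sPhiDensity hβ hA, sPhiDensity_measure_Icc hβ hA⟩
  rw [withDensity_apply _ MeasurableSet.univ, Measure.restrict_univ]
  exact (lintegral_sPhiDensity hβ hA).trans (by rw [one_div_mul_cancel hD.ne', ENNReal.ofReal_one])
end
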